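/- arXiv:math/9803165 — 2 statements merged into one kernel-verified Lean document; each statement's English description precedes it below -/
import Mathlib

section
/- Second-order Laurent data at a double pole of a Gamma product: let m ≥ 1, a not a nonpositive integer, ν ≥ m a natural number, and set f(ξ) = Γ(a+ξ)Γ(a+m+ξ). Then near ξ₀ = -a-ν, f(ξ) = c₋₂/(ξ-ξ₀)² + c₋₁/(ξ-ξ₀) + O(1) with c₋₂ = ((-1)^ν/ν!)·((-1)^{ν-m}/(ν-m)!) and c₋₁ = c₋₂·(ψ(ν+1) + ψ(ν-m+1)). -/
open Filter Topology

/-- The digamma function `ψ = Γ'/Γ`. -/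
noncomputable def digamma (z : ℂ) : ℂ := deriv Complex.Gamma z / Complex.Gamma z

lemma digamma_rec (z : ℂ) (hz : ∀ k : ℕ, z ≠ -k) :
    digamma (z + 1) = digamma z + 1 / z := by
  have hz0 : z ≠ 0 := by simpa using hz 0
  have hΓ : DifferentiableAt ℂ Complex.Gamma z := Complex.differentiableAt_Gamma z hz
  have hΓne : Complex.Gamma z ≠ 0 := Complex.Gamma_ne_zero hz
  have hz1 : ∀ k : ℕ, z + 1 ≠ -k := by
    intro k h
    exact hz (k + 1) (by push_cast; linear_combination h)
  have hΓ1 : DifferentiableAt ℂ Complex.Gamma (z + 1) :=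
    Complex.differentiableAt_Gamma _ hz1
  -- derivative of w ↦ Γ (w+1) at z, two ways
  have h1 : HasDerivAt (fun w => Complex.Gamma (w + 1)) (deriv Complex.Gamma (z + 1)) z := by
    exact (hΓ1.hasDerivAt.comp z ((hasDerivAt_id z).add_const 1)).congr_deriv (by simp)
  have h2 : HasDerivAt (fun w => w * Complex.Gamma w)
      (Complex.Gamma z + z * deriv Complex.Gamma z) z := by
    exact ((hasDerivAt_id' z).mul hΓ.hasDerivAt).congr_deriv (by simp)
  have hEq : (fun w => Complex.Gamma (w + 1)) =ᶠ[𝓝 z] fun w => w * Complex.Gamma w := by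
    filter_upwards [isOpen_compl_singleton.eventually_mem (by simpa using hz0 :
      z ∈ ({0}ᶜ : Set ℂ))] with w hw
    exact Complex.Gamma_add_one w hw
  have h3 : HasDerivAt (fun w => Complex.Gamma (w + 1))
      (Complex.Gamma z + z * deriv Complex.Gamma z) z := h2.congr_of_eventuallyEq hEq
  have hkey : deriv Complex.Gamma (z + 1) = Complex.Gamma z + z * deriv Complex.Gamma z :=
    h1.unique h3
  have hΓadd : Complex.Gamma (z + 1) = z * Complex.Gamma z := Complex.Gamma_add_one z hz0
  unfold digamma
  rw [hkey, hΓadd]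
  field_simp
  ring

noncomputable def Hfun : ℕ → ℂ → ℂ
  | 0 => fun z => Complex.Gamma (z + 1)
  | (n + 1) => fun z => Hfun n (z + 1) / z

lemma Hfun_spec (n : ℕ) :
    HasDerivAt (Hfun n) ((-1) ^ n / (n.factorial : ℂ) * digamma ((n : ℂ) + 1)) (-(n : ℂ)) ∧
    Hfun n (-(n : ℂ)) = (-1) ^ n / (n.factorial : ℂ) ∧
    ∀ᶠ z in 𝓝[≠] (-(n : ℂ)), Hfun n z = Complex.Gamma z * (z + n) := by
  induction n with
  | zero =>
    have h1 : ∀ k : ℕ, (1 : ℂ) ≠ -k := by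
      intro k h
      have : ((k + 1 : ℕ) : ℂ) = 0 := by push_cast; linear_combination h
      exact Nat.cast_ne_zero.mpr (Nat.succ_ne_zero k) this
    have hd : HasDerivAt (Hfun 0) (deriv Complex.Gamma 1) (-(0 : ℂ)) := by
      have hg := (Complex.differentiableAt_Gamma 1 h1).hasDerivAt
      rw [show (1 : ℂ) = -(0 : ℂ) + 1 by norm_num] at hg
      exact (hg.comp (-(0:ℂ)) ((hasDerivAt_id (-(0:ℂ))).add_const 1)).congr_deriv (by simp)
    refine ⟨?_, by simp [Hfun, Complex.Gamma_one], ?_⟩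
    · rw [show deriv Complex.Gamma 1 = digamma ((0 : ℂ) + 1) by
        simp [digamma, Complex.Gamma_one]] at hd
      simpa using hd
    · filter_upwards [self_mem_nhdsWithin] with z hz
      have hz0 : z ≠ 0 := by simpa using hz
      show Complex.Gamma (z + 1) = _
      rw [Complex.Gamma_add_one z hz0]
      push_cast
      ring
  | succ n ih =>
    obtain ⟨hd, hv, he⟩ := ih
    set c : ℂ := -((n : ℂ) + 1) with hc
    have hcn : -((n + 1 : ℕ) : ℂ) = c := by push_cast [hc]; ring
    have hc0 : c ≠ 0 := by
      intro h
      have : ((n : ℂ) + 1) = 0 := by linear_combination -h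
      exact (Nat.cast_add_one_ne_zero n) this
    have hc1 : c + 1 = -(n : ℂ) := by rw [hc]; ring
    have hfacne : ((n.factorial : ℂ)) ≠ 0 := Nat.cast_ne_zero.mpr n.factorial_ne_zero
    have hn1ne : ((n : ℂ) + 1) ≠ 0 := Nat.cast_add_one_ne_zero n
    -- digamma recurrence at n+1
    have hrec : digamma (((n : ℂ) + 1) + 1) = digamma ((n : ℂ) + 1) + 1 / ((n : ℂ) + 1) := by
      apply digamma_rec
      intro k h
      have := congrArg Complex.re h
      push_cast at this
      simp at this
      have hk : (0:ℝ) ≤ (k : ℝ) := Nat.cast_nonneg k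
      have hn : (0:ℝ) ≤ (n : ℝ) := Nat.cast_nonneg n
      linarith
    -- derivative
    rw [← hc1] at hd hv
    have hcomp : HasDerivAt (fun z => Hfun n (z + 1))
        ((-1) ^ n / (n.factorial : ℂ) * digamma ((n : ℂ) + 1)) c := by
      exact (hd.comp c ((hasDerivAt_id c).add_const 1)).congr_deriv (by simp)
    have hdiv : HasDerivAt (Hfun (n + 1))
        ((((-1) ^ n / (n.factorial : ℂ) * digamma ((n : ℂ) + 1)) * c -
          ((-1) ^ n / (n.factorial : ℂ)) * 1) / c ^ 2) c := by
      have := hcomp.div (hasDerivAt_id c) hc0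
      rw [hv] at this
      exact this
    have hfac1 : (((n + 1).factorial : ℂ)) = ((n : ℂ) + 1) * (n.factorial : ℂ) := by
      rw [Nat.factorial_succ]; push_cast; ring
    constructor
    · rw [hcn]
      convert hdiv using 1
      have harg : ((n + 1 : ℕ) : ℂ) + 1 = ((n : ℂ) + 1) + 1 := by push_cast; ring
      rw [harg, hrec, hfac1, hc, pow_succ]
      have halg : ∀ x y f d : ℂ, x ≠ 0 → f ≠ 0 →
          y * -1 / (x * f) * (d + 1 / x) = (y / f * d * -x - y / f * 1) / (-x) ^ 2 := by
        intro x y f d hx hf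
        field_simp
        ring
      exact halg _ _ _ _ hn1ne hfacne
    constructor
    · rw [hcn]
      show Hfun n (c + 1) / c = _
      rw [hv, hfac1, hc, pow_succ]
      have halg : ∀ x y f : ℂ, x ≠ 0 → f ≠ 0 → y / f / -x = y * -1 / (x * f) := by
        intro x y f hx hf
        field_simp
      exact halg _ _ _ hn1ne hfacne
    · rw [hcn]
      -- eventual identity
      have hmap : Tendsto (fun z : ℂ => z + 1) (𝓝[≠] c) (𝓝[≠] (-(n : ℂ))) := by
        rw [← hc1]
        apply tendsto_nhdsWithin_of_tendsto_nhds_of_eventually_within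
        · exact ((continuous_id.add continuous_const).tendsto c).mono_left nhdsWithin_le_nhds
        · filter_upwards [self_mem_nhdsWithin] with z hz
          simp only [Set.mem_compl_iff, Set.mem_singleton_iff] at hz ⊢
          exact fun h => hz (by linear_combination h)
      have hne0 : ∀ᶠ z in 𝓝[≠] c, z ≠ 0 := by
        have : ∀ᶠ z in 𝓝 c, z ≠ 0 := by
          filter_upwards [isOpen_compl_singleton.eventually_mem
            (by simpa using hc0 : c ∈ ({0}ᶜ : Set ℂ))] with w hw
          simpa using hw
        exact this.filter_mono nhdsWithin_le_nhds
      filter_upwards [hmap.eventually he, hne0] with z hz hz0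
      show Hfun n (z + 1) / z = _
      rw [hz, Complex.Gamma_add_one z hz0]
      push_cast
      field_simp
      ring

theorem gamma_product_double_pole_laurent (m : ℕ) (hm : 1 ≤ m) (a : ℂ)
    (ha : ∀ k : ℕ, a ≠ -k) (ν : ℕ) (hν : m ≤ ν) :
    Tendsto
      (fun ξ : ℂ => (ξ - (-a - ν)) ^ 2 *
        (Complex.Gamma (a + ξ) * Complex.Gamma (a + m + ξ)))
      (𝓝[≠] (-a - ν))
      (𝓝 ((-1) ^ ν / (ν.factorial : ℂ) * ((-1) ^ (ν - m) / ((ν - m).factorial : ℂ)))) ∧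
    Tendsto
      (fun ξ : ℂ => (ξ - (-a - ν)) *
        (Complex.Gamma (a + ξ) * Complex.Gamma (a + m + ξ) -
          (-1) ^ ν / (ν.factorial : ℂ) * ((-1) ^ (ν - m) / ((ν - m).factorial : ℂ)) /
            (ξ - (-a - ν)) ^ 2))
      (𝓝[≠] (-a - ν))
      (𝓝 ((-1) ^ ν / (ν.factorial : ℂ) * ((-1) ^ (ν - m) / ((ν - m).factorial : ℂ)) *
        (digamma ((ν : ℂ) + 1) + digamma (((ν - m : ℕ) : ℂ) + 1)))) := by
  obtain ⟨hd1, hv1, he1⟩ := Hfun_spec ν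
  obtain ⟨hd2, hv2, he2⟩ := Hfun_spec (ν - m)
  set ξ₀ : ℂ := -a - ν with hξ₀
  set c₂ : ℂ := (-1) ^ ν / (ν.factorial : ℂ) * ((-1) ^ (ν - m) / ((ν - m).factorial : ℂ))
    with hc₂
  have hcast : ((ν - m : ℕ) : ℂ) = (ν : ℂ) - (m : ℂ) := by
    push_cast [Nat.cast_sub hν]; ring
  have e1 : a + ξ₀ = -(ν : ℂ) := by rw [hξ₀]; ring
  have e2 : a + m + ξ₀ = -((ν - m : ℕ) : ℂ) := by rw [hξ₀, hcast]; ring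
  set F : ℂ → ℂ := fun ξ => Hfun ν (a + ξ) * Hfun (ν - m) (a + m + ξ) with hF
  -- derivative of F at ξ₀
  rw [← e1] at hd1 hv1
  rw [← e2] at hd2 hv2
  have hA : HasDerivAt (fun ξ => Hfun ν (a + ξ))
      ((-1) ^ ν / (ν.factorial : ℂ) * digamma ((ν : ℂ) + 1)) ξ₀ := by
    exact (hd1.comp ξ₀ ((hasDerivAt_id ξ₀).const_add a)).congr_deriv (by simp)
  have hB : HasDerivAt (fun ξ => Hfun (ν - m) (a + m + ξ))
      ((-1) ^ (ν - m) / ((ν - m).factorial : ℂ) * digamma (((ν - m : ℕ) : ℂ) + 1)) ξ₀ := by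
    exact (hd2.comp ξ₀ ((hasDerivAt_id ξ₀).const_add (a + m))).congr_deriv (by simp)
  have hDF : HasDerivAt F
      (c₂ * (digamma ((ν : ℂ) + 1) + digamma (((ν - m : ℕ) : ℂ) + 1))) ξ₀ := by
    have := hA.mul hB
    rw [hv1, hv2] at this
    refine this.congr_deriv ?_
    rw [hc₂]; ring
  have hFval : F ξ₀ = c₂ := by rw [hF]; simp only; rw [hv1, hv2]
  -- maps into punctured neighborhoods
  have hmap1 : Tendsto (fun ξ : ℂ => a + ξ) (𝓝[≠] ξ₀) (𝓝[≠] (a + ξ₀)) := by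
    apply tendsto_nhdsWithin_of_tendsto_nhds_of_eventually_within
    · exact ((continuous_const.add continuous_id).tendsto ξ₀).mono_left nhdsWithin_le_nhds
    · filter_upwards [self_mem_nhdsWithin] with z hz
      simp only [Set.mem_compl_iff, Set.mem_singleton_iff] at hz ⊢
      exact fun h => hz (by linear_combination h)
  have hmap2 : Tendsto (fun ξ : ℂ => a + m + ξ) (𝓝[≠] ξ₀) (𝓝[≠] (a + m + ξ₀)) := by
    apply tendsto_nhdsWithin_of_tendsto_nhds_of_eventually_within
    · exact ((continuous_const.add continuous_id).tendsto ξ₀).mono_left nhdsWithin_le_nhds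
    · filter_upwards [self_mem_nhdsWithin] with z hz
      simp only [Set.mem_compl_iff, Set.mem_singleton_iff] at hz ⊢
      exact fun h => hz (by linear_combination h)
  rw [e1] at hmap1
  rw [e2] at hmap2
  -- eventual identity
  have heq : ∀ᶠ ξ in 𝓝[≠] ξ₀,
      (ξ - ξ₀) ^ 2 * (Complex.Gamma (a + ξ) * Complex.Gamma (a + m + ξ)) = F ξ := by
    filter_upwards [hmap1.eventually he1, hmap2.eventually he2] with ξ h1 h2
    rw [hF]
    simp only
    rw [h1, h2, hcast, hξ₀]
    ring
  constructor
  · have hcont : Tendsto F (𝓝[≠] ξ₀) (𝓝 c₂) := by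
      rw [← hFval]
      exact hDF.differentiableAt.continuousAt.tendsto.mono_left nhdsWithin_le_nhds
    exact hcont.congr' (heq.mono fun ξ h => h.symm)
  · have hslope : Tendsto (slope F ξ₀) (𝓝[≠] ξ₀)
        (𝓝 (c₂ * (digamma ((ν : ℂ) + 1) + digamma (((ν - m : ℕ) : ℂ) + 1)))) :=
      hasDerivAt_iff_tendsto_slope.mp hDF
    apply hslope.congr'
    filter_upwards [heq, self_mem_nhdsWithin] with ξ hξ hξne
    have hsub : ξ - ξ₀ ≠ 0 := sub_ne_zero.mpr (by simpa using hξne)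
    rw [slope_def_field, div_eq_iff hsub, hFval, ← hξ]
    field_simp
end

section
/- Convergence of the logarithmic tail series: for complex a₁ with -a₁ ∉ ℕ, a₃, a₄, b₁, b₂, b₃ with a₃-a₁, a₄-a₁ ∉ ℤ, a natural number m, and complex z with |z| > 1, the series ∑_{ν=m}^∞ (|z|^{-ν}/(ν!(ν-m)!)) |Γ(a₁+ν)Γ(a₃-a₁-ν)Γ(a₄-a₁-ν)/(Γ(b₁-a₁-ν)Γ(b₂-a₁-ν)Γ(b₃-a₁-ν))| (|A_ν| + |log(-z)|) converges, where A_ν is as in the paper's first expansion (a sum of eight digamma values growing like O(log ν)). -/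
open Filter Topology Bornology

theorem summable_of_succ_eq_mul_of_tendsto {f ρ : ℕ → ℝ} {l : ℝ} (hl : |l| < 1)
    (hρ : Tendsto ρ atTop (𝓝 l)) (hf : ∀ k, f (k + 1) = ρ k * f k) : Summable f := by
  obtain ⟨r, hlr, hr⟩ := exists_between hl
  refine summable_of_ratio_norm_eventually_le hr ?_
  filter_upwards [hρ.abs.eventually_le_const hlr] with k hk
  rw [hf, norm_mul, Real.norm_eq_abs]
  exact mul_le_mul_of_nonneg_right hk (norm_nonneg _)

theorem tendsto_succ_div_of_sub_tendsto_zero {v : ℕ → ℝ} {c : ℝ} (hc : 0 < c) (hv : ∀ k, c ≤ v k)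
    (hdiff : Tendsto (fun k => v (k + 1) - v k) atTop (𝓝 0)) :
    Tendsto (fun k => v (k + 1) / v k) atTop (𝓝 1) := by
  have hquot : Tendsto (fun k => (v (k + 1) - v k) / v k) atTop (𝓝 0) := by
    refine squeeze_zero_norm (fun k => ?_) (by simpa using hdiff.norm.div_const c)
    rw [norm_div, Real.norm_of_nonneg (hc.trans_le (hv k)).le]
    exact div_le_div_of_nonneg_left (norm_nonneg _) hc (hv k)
  simpa using (hquot.const_add 1).congr fun k => by
    field_simp [(hc.trans_le (hv k)).ne']
    ring

section NormedField

variable {𝕜 : Type*} [NormedField 𝕜]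

theorem tendsto_add_div_add_cobounded (w w' : 𝕜) :
    Tendsto (fun x => (w + x) / (w' + x)) (cobounded 𝕜) (𝓝 1) := by
  have hinv : Tendsto (fun x => (w' + x)⁻¹) (cobounded 𝕜) (𝓝 0) :=
    tendsto_inv₀_cobounded.comp (tendsto_const_add_cobounded w')
  have hne : ∀ᶠ x in cobounded 𝕜, w' + x ≠ 0 :=
    (tendsto_const_add_cobounded w').eventually_ne_cobounded 0
  simpa using ((hinv.const_mul (w - w')).const_add 1).congr' (hne.mono fun x hx => by
    field_simp; ring)

theorem tendsto_sub_div_sub_cobounded (w w' : 𝕜) :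
    Tendsto (fun x => (w - x) / (w' - x)) (cobounded 𝕜) (𝓝 1) := by
  simpa [Function.comp_def, sub_eq_add_neg] using
    (tendsto_add_div_add_cobounded w w').comp tendsto_neg_cobounded

theorem tendsto_sub_div_add_cobounded (w w' : 𝕜) :
    Tendsto (fun x => (w - x) / (w' + x)) (cobounded 𝕜) (𝓝 (-1)) := by
  refine ((tendsto_add_div_add_cobounded (-w) w').neg).congr fun x => ?_
  rw [← neg_div]; ring

end NormedField

theorem digamma_eq_complex_digamma : digamma = Complex.digamma := rfl

theorem add_natCast_ne_neg_natCast {a : ℂ} (ha : ∀ n : ℕ, a ≠ -n) (ν : ℕ) :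
    ∀ n : ℕ, a + ν ≠ -n := fun n h => ha (ν + n) (by push_cast; linear_combination h)

theorem sub_natCast_ne_neg_natCast {c : ℂ} (hc : ∀ n : ℤ, c ≠ n) (ν : ℕ) :
    ∀ n : ℕ, c - ν ≠ -n := fun n h => hc (ν - n) (by push_cast; linear_combination h)

theorem natCast_add_one_ne_neg_natCast (ν : ℕ) : ∀ n : ℕ, (ν : ℂ) + 1 ≠ -n := fun n h => by
  have := congrArg Complex.re h
  simp at this
  linarith

theorem Gamma_add_natCast_succ {a : ℂ} (ha : ∀ n : ℕ, a ≠ -n) (ν : ℕ) :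
    Complex.Gamma (a + (ν + 1 : ℕ)) = (a + ν) * Complex.Gamma (a + ν) := by
  rw [Nat.cast_succ, ← add_assoc, Complex.Gamma_add_one]
  simpa using add_natCast_ne_neg_natCast ha ν 0

theorem Gamma_sub_natCast {c : ℂ} (hc : ∀ n : ℤ, c ≠ n) (ν : ℕ) :
    Complex.Gamma (c - ν) = (c - (ν + 1)) * Complex.Gamma (c - (ν + 1 : ℕ)) := by
  have h := Complex.Gamma_add_one _ (by simpa using sub_natCast_ne_neg_natCast hc (ν + 1) 0)
  rw [show c - ((ν : ℂ) + 1) + 1 = c - ν by ring] at h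
  rw [Nat.cast_succ, h]

theorem digamma_add_natCast_succ {a : ℂ} (ha : ∀ n : ℕ, a ≠ -n) (ν : ℕ) :
    digamma (a + (ν + 1 : ℕ)) = digamma (a + ν) + (a + ν)⁻¹ := by
  rw [digamma_eq_complex_digamma, Nat.cast_succ, ← add_assoc]
  exact Complex.digamma_apply_add_one _ (add_natCast_ne_neg_natCast ha ν)

theorem digamma_sub_natCast {c : ℂ} (hc : ∀ n : ℤ, c ≠ n) (ν : ℕ) :
    digamma (c - ν) = digamma (c - (ν + 1 : ℕ)) + (c - (ν + 1))⁻¹ := by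
  have h := Complex.digamma_apply_add_one _ (sub_natCast_ne_neg_natCast hc (ν + 1))
  rw [Nat.cast_succ, show c - ((ν : ℂ) + 1) + 1 = c - ν by ring] at h
  rw [digamma_eq_complex_digamma, Nat.cast_succ, h]

theorem Gamma_sub_natCast_eq_zero {d : ℂ} {n : ℤ} (hd : d = n) {ν : ℕ} (hν : n ≤ ν) :
    Complex.Gamma (d - ν) = 0 := by
  rw [Complex.Gamma_eq_zero_iff]
  refine ⟨(ν - n).toNat, ?_⟩
  have h : ((((ν : ℤ) - n).toNat : ℕ) : ℂ) = ν - n := by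
    exact_mod_cast congrArg (Int.cast : ℤ → ℂ) (Int.toNat_of_nonneg (sub_nonneg.2 hν))
  rw [hd, h]; ring

theorem tendsto_natCast_add_cobounded (m : ℕ) :
    Tendsto (fun k : ℕ => ((m + k : ℕ) : ℂ)) atTop (cobounded ℂ) :=
  tendsto_natCast_atTop_cobounded.comp (tendsto_atTop_mono (Nat.le_add_left · m) tendsto_id)

section GammaQuotient

variable (a c₃ c₄ d₁ d₂ d₃ : ℂ)

/- With `a = a₁`, `cᵢ = aᵢ - a₁` and `dᵢ = bᵢ - a₁`, `digammaSum … ν (ν - m)` is the paper's `A_ν`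
and `tailCoeff … z m k * (‖digammaSum … (m + k) k‖ + ‖log (-z)‖)` is its term of index `m + k`. -/

noncomputable def gammaQuotient (ν : ℕ) : ℂ :=
  Complex.Gamma (a + ν) * Complex.Gamma (c₃ - ν) * Complex.Gamma (c₄ - ν) /
    (Complex.Gamma (d₁ - ν) * Complex.Gamma (d₂ - ν) * Complex.Gamma (d₃ - ν))

noncomputable def digammaSum (ν k : ℕ) : ℂ :=
  digamma (ν + 1) + digamma (k + 1) + digamma (c₃ - ν) + digamma (c₄ - ν) -
    digamma (a + ν) - digamma (d₁ - ν) - digamma (d₂ - ν) - digamma (d₃ - ν)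

noncomputable def tailRatio (ν k : ℕ) : ℂ :=
  (a + ν) / (ν + 1) * ((d₁ - (ν + 1)) / (c₃ - (ν + 1))) * ((d₂ - (ν + 1)) / (c₄ - (ν + 1))) *
    ((d₃ - (ν + 1)) / (k + 1))

noncomputable def tailCoeff (z : ℂ) (m k : ℕ) : ℝ :=
  ‖z‖ ^ (-((m + k : ℕ) : ℤ)) / (((m + k).factorial : ℝ) * (k.factorial : ℝ)) *
    ‖gammaQuotient a c₃ c₄ d₁ d₂ d₃ (m + k)‖

variable {a c₃ c₄ d₁ d₂ d₃}

theorem gammaQuotient_succ (ha : ∀ n : ℕ, a ≠ -n) (hc₃ : ∀ n : ℤ, c₃ ≠ n)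
    (hc₄ : ∀ n : ℤ, c₄ ≠ n) (hd₁ : ∀ n : ℤ, d₁ ≠ n) (hd₂ : ∀ n : ℤ, d₂ ≠ n)
    (hd₃ : ∀ n : ℤ, d₃ ≠ n) (ν : ℕ) :
    gammaQuotient a c₃ c₄ d₁ d₂ d₃ (ν + 1) = gammaQuotient a c₃ c₄ d₁ d₂ d₃ ν *
      ((a + ν) * (d₁ - (ν + 1)) * (d₂ - (ν + 1)) * (d₃ - (ν + 1)) /
        ((c₃ - (ν + 1)) * (c₄ - (ν + 1)))) := by
  have hΓ {d : ℂ} (hd : ∀ n : ℤ, d ≠ n) : Complex.Gamma (d - (ν + 1 : ℕ)) ≠ 0 :=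
    Complex.Gamma_ne_zero (sub_natCast_ne_neg_natCast hd _)
  have hne {d : ℂ} (hd : ∀ n : ℤ, d ≠ n) : d - (ν + 1) ≠ 0 := by
    simpa using sub_natCast_ne_neg_natCast hd (ν + 1) 0
  unfold gammaQuotient
  rw [Gamma_add_natCast_succ ha, Gamma_sub_natCast hc₃ ν, Gamma_sub_natCast hc₄ ν,
    Gamma_sub_natCast hd₁ ν, Gamma_sub_natCast hd₂ ν, Gamma_sub_natCast hd₃ ν]
  field_simp [hΓ hd₁, hΓ hd₂, hΓ hd₃, hne hc₃, hne hc₄, hne hd₁, hne hd₂, hne hd₃]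

theorem digammaSum_succ_sub (ha : ∀ n : ℕ, a ≠ -n) (hc₃ : ∀ n : ℤ, c₃ ≠ n)
    (hc₄ : ∀ n : ℤ, c₄ ≠ n) (hd₁ : ∀ n : ℤ, d₁ ≠ n) (hd₂ : ∀ n : ℤ, d₂ ≠ n)
    (hd₃ : ∀ n : ℤ, d₃ ≠ n) (ν k : ℕ) :
    digammaSum a c₃ c₄ d₁ d₂ d₃ (ν + 1) (k + 1) - digammaSum a c₃ c₄ d₁ d₂ d₃ ν k =
      ((ν : ℂ) + 1)⁻¹ + ((k : ℂ) + 1)⁻¹ - (c₃ - (ν + 1))⁻¹ - (c₄ - (ν + 1))⁻¹ - (a + ν)⁻¹ +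
        (d₁ - (ν + 1))⁻¹ + (d₂ - (ν + 1))⁻¹ + (d₃ - (ν + 1))⁻¹ := by
  have hone (n : ℕ) : digamma ((n + 1 : ℕ) + 1) = digamma (n + 1) + ((n : ℂ) + 1)⁻¹ := by
    rw [Nat.cast_succ]
    exact Complex.digamma_apply_add_one _ (natCast_add_one_ne_neg_natCast n)
  unfold digammaSum
  rw [hone, hone, digamma_add_natCast_succ ha, digamma_sub_natCast hc₃ ν,
    digamma_sub_natCast hc₄ ν, digamma_sub_natCast hd₁ ν, digamma_sub_natCast hd₂ ν,
    digamma_sub_natCast hd₃ ν]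
  ring

variable (a c₃ c₄ d₁ d₂ d₃) in
theorem tendsto_tailRatio (m : ℕ) :
    Tendsto (fun k => tailRatio a c₃ c₄ d₁ d₂ d₃ (m + k) k) atTop (𝓝 (-1)) := by
  have hν := tendsto_natCast_add_cobounded m
  have h₁ := (tendsto_add_div_add_cobounded a 1).comp hν
  have h₂ := (tendsto_sub_div_sub_cobounded (d₁ - 1) (c₃ - 1)).comp hν
  have h₃ := (tendsto_sub_div_sub_cobounded (d₂ - 1) (c₄ - 1)).comp hν
  have h₄ := (tendsto_sub_div_add_cobounded (d₃ - 1) (1 - m)).comp hν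
  simpa using (((h₁.mul h₂).mul h₃).mul h₄).congr fun k => by
    simp only [tailRatio, Function.comp_apply]; push_cast; ring

theorem tailCoeff_succ (ha : ∀ n : ℕ, a ≠ -n) (hc₃ : ∀ n : ℤ, c₃ ≠ n)
    (hc₄ : ∀ n : ℤ, c₄ ≠ n) (hd₁ : ∀ n : ℤ, d₁ ≠ n) (hd₂ : ∀ n : ℤ, d₂ ≠ n)
    (hd₃ : ∀ n : ℤ, d₃ ≠ n) {z : ℂ} (hz : z ≠ 0) (m k : ℕ) :
    tailCoeff a c₃ c₄ d₁ d₂ d₃ z m (k + 1) =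
      ‖z‖⁻¹ * ‖tailRatio a c₃ c₄ d₁ d₂ d₃ (m + k) k‖ * tailCoeff a c₃ c₄ d₁ d₂ d₃ z m k := by
  unfold tailCoeff
  rw [← add_assoc, gammaQuotient_succ ha hc₃ hc₄ hd₁ hd₂ hd₃]
  set ν := m + k
  set R := (a + ν) * (d₁ - (ν + 1)) * (d₂ - (ν + 1)) * (d₃ - (ν + 1)) /
    ((c₃ - (ν + 1)) * (c₄ - (ν + 1)))
  have hnorm (n : ℕ) : ‖(n : ℂ) + 1‖ = n + 1 := by
    rw [← Nat.cast_succ, Complex.norm_natCast, Nat.cast_succ]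
  have hratio : ‖tailRatio a c₃ c₄ d₁ d₂ d₃ ν k‖ = ‖R‖ / ((ν + 1) * (k + 1)) := by
    rw [show tailRatio a c₃ c₄ d₁ d₂ d₃ ν k = R / ((ν + 1) * (k + 1)) by
      simp only [tailRatio, R, div_mul_div_comm, div_div]; ring, norm_div, norm_mul, hnorm, hnorm]
  rw [hratio, norm_mul,
    Nat.factorial_succ, Nat.factorial_succ, Nat.cast_succ, neg_add,
    zpow_add₀ (norm_ne_zero_iff.2 hz), zpow_neg_one, Nat.cast_mul, Nat.cast_mul, Nat.cast_succ,
    Nat.cast_succ]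
  field_simp

theorem tendsto_digammaSum_succ_sub (ha : ∀ n : ℕ, a ≠ -n) (hc₃ : ∀ n : ℤ, c₃ ≠ n)
    (hc₄ : ∀ n : ℤ, c₄ ≠ n) (hd₁ : ∀ n : ℤ, d₁ ≠ n) (hd₂ : ∀ n : ℤ, d₂ ≠ n)
    (hd₃ : ∀ n : ℤ, d₃ ≠ n) (m : ℕ) :
    Tendsto (fun k => digammaSum a c₃ c₄ d₁ d₂ d₃ (m + (k + 1)) (k + 1) -
      digammaSum a c₃ c₄ d₁ d₂ d₃ (m + k) k) atTop (𝓝 0) := by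
  have hinv {f : ℂ → ℂ} (hf : Tendsto f (cobounded ℂ) (cobounded ℂ)) :
      Tendsto (fun k => (f ((m + k : ℕ) : ℂ))⁻¹) atTop (𝓝 0) :=
    tendsto_inv₀_cobounded.comp (hf.comp (tendsto_natCast_add_cobounded m))
  have hsub (c : ℂ) := hinv ((tendsto_const_sub_cobounded c).comp (tendsto_add_const_cobounded 1))
  have hk : Tendsto (fun k : ℕ => ((k : ℂ) + 1)⁻¹) atTop (𝓝 0) :=
    tendsto_inv₀_cobounded.comp
      ((tendsto_add_const_cobounded 1).comp tendsto_natCast_atTop_cobounded)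
  have h := (((((((hinv (tendsto_add_const_cobounded 1)).add hk).sub (hsub c₃)).sub
    (hsub c₄)).sub (hinv (tendsto_const_add_cobounded a))).add (hsub d₁)).add (hsub d₂)).add
    (hsub d₃)
  simp only [add_zero, sub_zero] at h
  exact h.congr fun k => (digammaSum_succ_sub ha hc₃ hc₄ hd₁ hd₂ hd₃ (m + k) k).symm

theorem summable_tailCoeff_mul (ha : ∀ n : ℕ, a ≠ -n) (hc₃ : ∀ n : ℤ, c₃ ≠ n)
    (hc₄ : ∀ n : ℤ, c₄ ≠ n) (hd₁ : ∀ n : ℤ, d₁ ≠ n) (hd₂ : ∀ n : ℤ, d₂ ≠ n)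
    (hd₃ : ∀ n : ℤ, d₃ ≠ n) {z : ℂ} (hz : 1 < ‖z‖) (m : ℕ) :
    Summable fun k => tailCoeff a c₃ c₄ d₁ d₂ d₃ z m k *
      (‖digammaSum a c₃ c₄ d₁ d₂ d₃ (m + k) k‖ + ‖Complex.log (-z)‖) := by
  set v := fun k => ‖digammaSum a c₃ c₄ d₁ d₂ d₃ (m + k) k‖ + ‖Complex.log (-z)‖
  have hlog : 0 < ‖Complex.log (-z)‖ := by
    refine lt_of_lt_of_le ?_ (Complex.re_le_norm _)
    rw [Complex.log_re, norm_neg]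
    exact Real.log_pos hz
  have hv : Tendsto (fun k => v (k + 1) / v k) atTop (𝓝 1) := by
    refine tendsto_succ_div_of_sub_tendsto_zero hlog
      (fun k => le_add_of_nonneg_left (norm_nonneg _)) (squeeze_zero_norm (fun k => ?_)
        (by simpa using (tendsto_digammaSum_succ_sub ha hc₃ hc₄ hd₁ hd₂ hd₃ m).norm))
    simp only [v, add_sub_add_right_eq_sub, Real.norm_eq_abs]
    exact abs_norm_sub_norm_le _ _
  refine summable_of_succ_eq_mul_of_tendsto (l := ‖z‖⁻¹ * ‖(-1 : ℂ)‖ * 1) ?_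
    (((tendsto_tailRatio a c₃ c₄ d₁ d₂ d₃ m).norm.const_mul _).mul hv) fun k => ?_
  · simpa [abs_of_pos (one_pos.trans hz)] using inv_lt_one_of_one_lt₀ hz
  · have hvk : v k ≠ 0 := (hlog.trans_le (le_add_of_nonneg_left (norm_nonneg _))).ne'
    rw [tailCoeff_succ ha hc₃ hc₄ hd₁ hd₂ hd₃ (norm_pos_iff.1 (one_pos.trans hz))]
    change _ * v (k + 1) = _ * (v (k + 1) / v k) * (_ * v k)
    field_simp

theorem gammaQuotient_eventually_eq_zero (hd : ∃ n : ℤ, d₁ = n ∨ d₂ = n ∨ d₃ = n) :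
    ∀ᶠ ν in atTop, gammaQuotient a c₃ c₄ d₁ d₂ d₃ ν = 0 := by
  obtain ⟨n, hn⟩ := hd
  filter_upwards [eventually_ge_atTop n.toNat] with ν hν
  have hnν : n ≤ ν := by have := Int.self_le_toNat n; omega
  have hΓ : Complex.Gamma (d₁ - ν) * Complex.Gamma (d₂ - ν) * Complex.Gamma (d₃ - ν) = 0 := by
    rcases hn with h | h | h <;> simp [Gamma_sub_natCast_eq_zero h hnν]
  rw [gammaQuotient, hΓ, div_zero]

end GammaQuotient

/-- The series over `ν = m, m+1, …` is written with shifted index `ν = m + k`. -/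
theorem log_tail_series_summable (m : ℕ) (a₁ a₃ a₄ b₁ b₂ b₃ z : ℂ)
    (ha₁ : ∀ k : ℕ, a₁ ≠ -k)
    (h31 : ∀ n : ℤ, a₃ - a₁ ≠ n) (h41 : ∀ n : ℤ, a₄ - a₁ ≠ n)
    (hz : 1 < norm z) :
    Summable (fun k : ℕ =>
      (norm z) ^ (-((m + k : ℕ) : ℤ)) /
        (((m + k).factorial : ℝ) * (k.factorial : ℝ)) *
      norm
        (Complex.Gamma (a₁ + (m + k : ℕ)) * Complex.Gamma (a₃ - a₁ - (m + k : ℕ)) *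
          Complex.Gamma (a₄ - a₁ - (m + k : ℕ)) /
          (Complex.Gamma (b₁ - a₁ - (m + k : ℕ)) * Complex.Gamma (b₂ - a₁ - (m + k : ℕ)) *
            Complex.Gamma (b₃ - a₁ - (m + k : ℕ)))) *
      (norm
        (digamma ((m + k : ℕ) + 1) + digamma ((k : ℂ) + 1) +
          digamma (a₃ - a₁ - (m + k : ℕ)) + digamma (a₄ - a₁ - (m + k : ℕ)) -
          digamma (a₁ + (m + k : ℕ)) - digamma (b₁ - a₁ - (m + k : ℕ)) -
          digamma (b₂ - a₁ - (m + k : ℕ)) - digamma (b₃ - a₁ - (m + k : ℕ))) +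
        norm (Complex.log (-z)))) := by
  change Summable fun k => tailCoeff a₁ (a₃ - a₁) (a₄ - a₁) (b₁ - a₁) (b₂ - a₁) (b₃ - a₁) z m k *
    (‖digammaSum a₁ (a₃ - a₁) (a₄ - a₁) (b₁ - a₁) (b₂ - a₁) (b₃ - a₁) (m + k) k‖ +
      ‖Complex.log (-z)‖)
  by_cases hd : ∃ n : ℤ, b₁ - a₁ = n ∨ b₂ - a₁ = n ∨ b₃ - a₁ = n
  -- `Complex.Gamma` is `0` at its poles and `x / 0 = 0`, so here the tail terms all vanish.
  · refine Summable.of_norm_bounded_eventually_nat summable_zero ?_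
    filter_upwards [(tendsto_atTop_mono (Nat.le_add_left · m) tendsto_id).eventually
      (gammaQuotient_eventually_eq_zero (a := a₁) (c₃ := a₃ - a₁) (c₄ := a₄ - a₁) hd)] with k hk
    simp [tailCoeff, hk]
  · simp only [not_exists, not_or] at hd
    exact summable_tailCoeff_mul ha₁ h31 h41 (fun n => (hd n).1) (fun n => (hd n).2.1)
      (fun n => (hd n).2.2) hz m
end
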